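/- arXiv:1904.01859 — 7 statements merged into one kernel-verified Lean document; each statement's English description precedes it below -/
import Mathlib

section
/- The mean of the derived distribution satisfies E_g[X] = E_f[X] - ∫_a^b u(y)v(y) dy, hence E_g[X] ≤ E_f[X]. -/
/-!
Integrating `(y u v)' = u v + y (u' v + u v')` over `(a, b)` gives the identity, provided `y u v`
vanishes at both ends. Near `a` this holds because `v` decreases and `u(a+) = 0`:
`u x v x = v x ∫_a^x u' ≤ ∫_a^x u' v → 0` as `x → a`; symmetrically
`u x v x ≤ ∫_x^b (-u v') → 0` as `x → b`. The inequality follows since `u v ≥ 0`.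
-/

open MeasureTheory Set Filter Topology intervalIntegral

theorem mul_sub_le_integral_deriv_mul {g g' h : ℝ → ℝ} {p q c : ℝ} (hpq : p ≤ q)
    (hg : ∀ t ∈ Icc p q, HasDerivAt g (g' t) t) (hg' : ∀ t ∈ Ioo p q, 0 ≤ g' t)
    (hh : ∀ t ∈ Ioo p q, c ≤ h t) (hint : IntegrableOn (fun t => g' t * h t) (Icc p q)) :
    c * (g q - g p) ≤ ∫ t in p..q, g' t * h t := by
  rw [mul_sub]
  refine sub_le_integral_of_hasDeriv_right_of_le (g := fun t => c * g t) (g' := fun t => c * g' t)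
    hpq (fun t ht => ((hg t ht).continuousAt.const_mul c).continuousWithinAt)
    (fun t ht => ((hg t (Ioo_subset_Icc_self ht)).const_mul c).hasDerivWithinAt) hint
    (fun t ht => ?_)
  rw [mul_comm c]
  exact mul_le_mul_of_nonneg_left (hh t ht) (hg' t ht)

theorem mul_le_integral_deriv_mul_of_tendsto_nhdsGT {u u' v : ℝ → ℝ} {a x : ℝ} (hax : a < x)
    (hu : ∀ t ∈ Ioc a x, HasDerivAt u (u' t) t) (hu' : ∀ t ∈ Ioo a x, 0 ≤ u' t)
    (hv : ∀ t ∈ Ioo a x, v x ≤ v t) (hua : Tendsto u (𝓝[>] a) (𝓝 0))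
    (hint : IntegrableOn (fun t => u' t * v t) (Icc a x)) :
    u x * v x ≤ ∫ t in a..x, u' t * v t := by
  have hlhs : Tendsto (fun s => v x * (u x - u s)) (𝓝[>] a) (𝓝 (u x * v x)) := by
    simpa [mul_comm] using (tendsto_const_nhds.sub hua).const_mul (v x)
  have hrhs : Tendsto (fun s => ∫ t in s..x, u' t * v t) (𝓝[>] a)
      (𝓝 (∫ t in a..x, u' t * v t)) := by
    rw [← uIcc_of_le hax.le] at hint
    exact ((continuousOn_primitive_interval_left hint a left_mem_uIcc).tendsto).mono_left
      (nhdsWithin_le_of_mem (uIcc_of_le hax.le ▸ Icc_mem_nhdsGT hax))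
  refine le_of_tendsto_of_tendsto hlhs hrhs ?_
  filter_upwards [Ioo_mem_nhdsGT hax] with s hs
  exact mul_sub_le_integral_deriv_mul hs.2.le
    (fun t ht => hu t ⟨hs.1.trans_le ht.1, ht.2⟩)
    (fun t ht => hu' t ⟨hs.1.trans ht.1, ht.2⟩)
    (fun t ht => hv t ⟨hs.1.trans ht.1, ht.2⟩)
    (hint.mono_set (Icc_subset_Icc_left hs.1.le))

theorem mul_le_integral_neg_mul_deriv_of_tendsto_nhdsLT {u v v' : ℝ → ℝ} {x b : ℝ} (hxb : x < b)
    (hv : ∀ t ∈ Ico x b, HasDerivAt v (v' t) t) (hv' : ∀ t ∈ Ioo x b, v' t ≤ 0)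
    (hu : ∀ t ∈ Ioo x b, u x ≤ u t) (hvb : Tendsto v (𝓝[<] b) (𝓝 0))
    (hint : IntegrableOn (fun t => -(u t * v' t)) (Icc x b)) :
    u x * v x ≤ ∫ t in x..b, -(u t * v' t) := by
  have hlhs : Tendsto (fun s => u x * (v x - v s)) (𝓝[<] b) (𝓝 (u x * v x)) := by
    simpa using (tendsto_const_nhds.sub hvb).const_mul (u x)
  have hrhs : Tendsto (fun s => ∫ t in x..s, -(u t * v' t)) (𝓝[<] b)
      (𝓝 (∫ t in x..b, -(u t * v' t))) := by
    rw [← uIcc_of_le hxb.le] at hint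
    exact ((continuousOn_primitive_interval hint b right_mem_uIcc).tendsto).mono_left
      (nhdsWithin_le_of_mem (uIcc_of_le hxb.le ▸ Icc_mem_nhdsLT hxb))
  refine le_of_tendsto_of_tendsto hlhs hrhs ?_
  filter_upwards [Ioo_mem_nhdsLT hxb] with s hs
  have hmul : ∀ t, -v' t * u t = -(u t * v' t) := fun t => by ring
  simpa only [hmul, sub_neg_eq_add, neg_add_eq_sub] using
    mul_sub_le_integral_deriv_mul (g := fun t => -v t) (h := u) hs.1.le
    (fun t ht => (hv t ⟨ht.1, ht.2.trans_lt hs.2⟩).neg)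
    (fun t ht => neg_nonneg.mpr (hv' t ⟨ht.1, ht.2.trans hs.2⟩))
    (fun t ht => hu t ⟨ht.1, ht.2.trans hs.2⟩)
    (by simpa only [hmul] using hint.mono_set (Icc_subset_Icc_right hs.2.le))

theorem tendsto_mul_nhdsGT_zero_of_antitoneOn {u u' v : ℝ → ℝ} {a b : ℝ} (hab : a < b)
    (hu : ∀ t ∈ Ioo a b, HasDerivAt u (u' t) t) (hu' : ∀ t ∈ Ioo a b, 0 ≤ u' t)
    (hu₀ : ∀ t ∈ Ioo a b, 0 ≤ u t) (hv₀ : ∀ t ∈ Ioo a b, 0 ≤ v t) (hv : AntitoneOn v (Ioo a b))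
    (hua : Tendsto u (𝓝[>] a) (𝓝 0)) (hint : IntegrableOn (fun t => u' t * v t) (Ioo a b)) :
    Tendsto (fun x => u x * v x) (𝓝[>] a) (𝓝 0) := by
  have hprim : Tendsto (fun x => ∫ t in a..x, u' t * v t) (𝓝[>] a) (𝓝 0) := by
    rw [← integrableOn_Icc_iff_integrableOn_Ioo, ← uIcc_of_le hab.le] at hint
    simpa using ((continuousOn_primitive_interval hint a left_mem_uIcc).tendsto).mono_left
      (nhdsWithin_le_of_mem (uIcc_of_le hab.le ▸ Icc_mem_nhdsGT hab))
  refine tendsto_of_tendsto_of_tendsto_of_le_of_le' tendsto_const_nhds hprim ?_ ?_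
  · filter_upwards [Ioo_mem_nhdsGT hab] with x hx
    exact mul_nonneg (hu₀ x hx) (hv₀ x hx)
  · filter_upwards [Ioo_mem_nhdsGT hab] with x hx
    refine mul_le_integral_deriv_mul_of_tendsto_nhdsGT hx.1
      (fun t ht => hu t ⟨ht.1, ht.2.trans_lt hx.2⟩) (fun t ht => hu' t ⟨ht.1, ht.2.trans hx.2⟩)
      (fun t ht => hv ⟨ht.1, ht.2.trans hx.2⟩ hx ht.2.le) hua ?_
    exact (integrableOn_Icc_iff_integrableOn_Ioo).mpr
      (hint.mono_set (Ioo_subset_Ioo_right hx.2.le))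

theorem tendsto_mul_nhdsLT_zero_of_monotoneOn {u v v' : ℝ → ℝ} {a b : ℝ} (hab : a < b)
    (hv : ∀ t ∈ Ioo a b, HasDerivAt v (v' t) t) (hv' : ∀ t ∈ Ioo a b, v' t ≤ 0)
    (hu₀ : ∀ t ∈ Ioo a b, 0 ≤ u t) (hv₀ : ∀ t ∈ Ioo a b, 0 ≤ v t) (hu : MonotoneOn u (Ioo a b))
    (hvb : Tendsto v (𝓝[<] b) (𝓝 0)) (hint : IntegrableOn (fun t => -(u t * v' t)) (Ioo a b)) :
    Tendsto (fun x => u x * v x) (𝓝[<] b) (𝓝 0) := by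
  have hprim : Tendsto (fun x => ∫ t in x..b, -(u t * v' t)) (𝓝[<] b) (𝓝 0) := by
    rw [← integrableOn_Icc_iff_integrableOn_Ioo, ← uIcc_of_le hab.le] at hint
    simpa using ((continuousOn_primitive_interval_left hint b right_mem_uIcc).tendsto).mono_left
      (nhdsWithin_le_of_mem (uIcc_of_le hab.le ▸ Icc_mem_nhdsLT hab))
  refine tendsto_of_tendsto_of_tendsto_of_le_of_le' tendsto_const_nhds hprim ?_ ?_
  · filter_upwards [Ioo_mem_nhdsLT hab] with x hx
    exact mul_nonneg (hu₀ x hx) (hv₀ x hx)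
  · filter_upwards [Ioo_mem_nhdsLT hab] with x hx
    refine mul_le_integral_neg_mul_deriv_of_tendsto_nhdsLT hx.2
      (fun t ht => hv t ⟨hx.1.trans_le ht.1, ht.2⟩) (fun t ht => hv' t ⟨hx.1.trans ht.1, ht.2⟩)
      (fun t ht => hu hx ⟨hx.1.trans ht.1, ht.2⟩ ht.1.le) hvb ?_
    exact (integrableOn_Icc_iff_integrableOn_Ioo).mpr
      (hint.mono_set (Ioo_subset_Ioo_left hx.1.le))

/-- The mean of the derived distribution satisfies
E_g[X] = E_f[X] - ∫_a^b u(y)v(y) dy, hence E_g[X] ≤ E_f[X]. -/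
theorem ibp_mean (a b : ℝ) (hab : a < b) (u v u' v' : ℝ → ℝ)
    (hu : ∀ x ∈ Ioo a b, HasDerivAt u (u' x) x)
    (hv : ∀ x ∈ Ioo a b, HasDerivAt v (v' x) x)
    (hu_nonneg : ∀ x ∈ Ioo a b, 0 ≤ u x)
    (hu'_nonneg : ∀ x ∈ Ioo a b, 0 ≤ u' x)
    (hv_nonneg : ∀ x ∈ Ioo a b, 0 ≤ v x)
    (hv'_nonpos : ∀ x ∈ Ioo a b, v' x ≤ 0)
    (hua : Tendsto u (nhdsWithin a (Ioi a)) (nhds 0))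
    (hvb : Tendsto v (nhdsWithin b (Iio b)) (nhds 0))
    (hf : ∫ x in Ioo a b, -(u x * v' x) = 1)
    (hg : ∫ x in Ioo a b, u' x * v x = 1)
    (hmean_f : IntegrableOn (fun y => y * (-(u y * v' y))) (Ioo a b))
    (hmean_g : IntegrableOn (fun y => y * (u' y * v y)) (Ioo a b))
    (huv_int : IntegrableOn (fun y => u y * v y) (Ioo a b)) :
    (∫ y in Ioo a b, y * (u' y * v y))
      = (∫ y in Ioo a b, y * (-(u y * v' y))) - ∫ y in Ioo a b, u y * v y ∧
    (∫ y in Ioo a b, y * (u' y * v y)) ≤ ∫ y in Ioo a b, y * (-(u y * v' y)) := by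
  have hIf : IntegrableOn (fun y => -(u y * v' y)) (Ioo a b) :=
    .of_integral_ne_zero (by simp [hf])
  have hIg : IntegrableOn (fun y => u' y * v y) (Ioo a b) :=
    .of_integral_ne_zero (by simp [hg])
  have hu_mono : MonotoneOn u (Ioo a b) := by
    refine monotoneOn_of_hasDerivWithinAt_nonneg (f' := u') (convex_Ioo a b)
      (HasDerivAt.continuousOn hu) ?_ ?_ <;> simp only [interior_Ioo]
    exacts [fun y hy => (hu y hy).hasDerivWithinAt, hu'_nonneg]
  have hv_anti : AntitoneOn v (Ioo a b) := by
    refine antitoneOn_of_hasDerivWithinAt_nonpos (f' := v') (convex_Ioo a b)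
      (HasDerivAt.continuousOn hv) ?_ ?_ <;> simp only [interior_Ioo]
    exacts [fun y hy => (hv y hy).hasDerivWithinAt, hv'_nonpos]
  have hFa : Tendsto (fun y => y * (u y * v y)) (𝓝[>] a) (𝓝 0) := by
    simpa using (tendsto_nhdsWithin_of_tendsto_nhds tendsto_id).mul
      (tendsto_mul_nhdsGT_zero_of_antitoneOn hab hu hu'_nonneg hu_nonneg hv_nonneg hv_anti hua hIg)
  have hFb : Tendsto (fun y => y * (u y * v y)) (𝓝[<] b) (𝓝 0) := by
    simpa using (tendsto_nhdsWithin_of_tendsto_nhds tendsto_id).mul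
      (tendsto_mul_nhdsLT_zero_of_monotoneOn hab hv hv'_nonpos hu_nonneg hv_nonneg hu_mono hvb hIf)
  have hderiv : ∀ y ∈ Ioo a b, HasDerivAt (fun y => y * (u y * v y))
      (u y * v y + y * (u' y * v y) - y * (-(u y * v' y))) y := fun y hy =>
    ((hasDerivAt_id' y).mul ((hu y hy).mul (hv y hy))).congr_deriv
      (by simp only [Pi.mul_apply]; ring)
  have hint₁ : IntegrableOn (fun y => u y * v y + y * (u' y * v y)) (Ioo a b) :=
    huv_int.add hmean_g
  have hint := hint₁.sub hmean_f
  have hzero : ∫ y in Ioo a b, (u y * v y + y * (u' y * v y) - y * (-(u y * v' y))) = 0 := by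
    rw [← integral_Ioc_eq_integral_Ioo, ← integral_of_le hab.le,
      integral_eq_sub_of_hasDerivAt_of_tendsto hab hderiv
        ((intervalIntegrable_iff_integrableOn_Ioo_of_le hab.le).mpr hint) hFa hFb, sub_zero]
  rw [integral_sub hint₁ hmean_f, integral_add huv_int hmean_g] at hzero
  have huv_nonneg : 0 ≤ ∫ y in Ioo a b, u y * v y :=
    setIntegral_nonneg measurableSet_Ioo fun y hy => mul_nonneg (hu_nonneg y hy) (hv_nonneg y hy)
  constructor <;> linarith
end

section
/- The function g(t) = α√π · Φ(-√(2αt)) / √(αt) for t > 0 is a probability density function on (0,∞), i.e., g ≥ 0 and ∫_0^∞ g(t) dt = 1. -/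
open MeasureTheory Set Real

/-- The standard normal distribution function Φ. -/
noncomputable def Phi (z : ℝ) : ℝ :=
  (Real.sqrt (2 * Real.pi))⁻¹ * ∫ y in Set.Iic z, Real.exp (-y ^ 2 / 2)

open Filter Topology

/-! Substituting `t = x²` and then `u = √(2α) x` turns the integral into `√(2π) ∫₀^∞ Φ(-u) du`.
Writing `Φ(-u) = Q(u) / √(2π)` with the Gaussian tail `Q(u) = ∫_u^∞ exp(-y²/2) dy`, it remains to see
`∫₀^∞ Q = 1`: since `Q' = -exp(-u²/2)`, an antiderivative of `Q` is `u Q(u) - exp(-u²/2)`, which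
increases from `-1` at `0` to `0` at infinity. -/

theorem hasDerivAt_integral_Ioi {E : Type*} [NormedAddCommGroup E] [NormedSpace ℝ E]
    [CompleteSpace E] {f : ℝ → E} (hf : Integrable f) (hf_cont : Continuous f) (u : ℝ) :
    HasDerivAt (fun v => ∫ y in Ioi v, f y) (-f u) u := by
  have hsplit : (fun v => ∫ y in Ioi v, f y) =
      fun v => (∫ y in Ioi 0, f y) - ∫ y in (0 : ℝ)..v, f y := by
    funext v
    exact eq_sub_of_add_eq'
      (intervalIntegral.integral_interval_add_Ioi hf.integrableOn hf.integrableOn)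
  rw [hsplit]
  exact (intervalIntegral.integral_hasDerivAt_right hf.intervalIntegrable
    (hf_cont.stronglyMeasurableAtFilter _ _) hf_cont.continuousAt).const_sub _

theorem integral_comp_sqrt_div_sqrt_Ioi (h : ℝ → ℝ) :
    ∫ t in Ioi 0, h (√t) / √t = 2 * ∫ x in Ioi 0, h x := by
  rw [← integral_comp_rpow_Ioi_of_pos two_pos, ← integral_const_mul]
  refine setIntegral_congr_fun measurableSet_Ioi fun x (hx : 0 < x) => ?_
  have hsqrt : √(x ^ (2 : ℝ)) = x := by
    rw [rpow_two, sqrt_sq hx.le]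
  rw [smul_eq_mul, hsqrt, show (2 : ℝ) - 1 = 1 by norm_num, rpow_one]
  field_simp

theorem integrableOn_const_mul_exp_neg_Ioi (c a : ℝ) :
    IntegrableOn (fun y : ℝ => c * exp (-y)) (Ioi a) := by
  simpa [IntegrableOn] using (exp_neg_integrableOn_Ioi a one_pos).const_mul c

theorem integrable_exp_neg_sq_div_two : Integrable fun y : ℝ => exp (-y ^ 2 / 2) := by
  simpa [neg_div, div_eq_inv_mul] using integrable_exp_neg_mul_sq (b := 2⁻¹) (by norm_num)

theorem exp_neg_sq_div_two_le (y : ℝ) : exp (-y ^ 2 / 2) ≤ exp (1 / 2) * exp (-y) := by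
  rw [← exp_add, exp_le_exp]
  nlinarith [sq_nonneg (y - 1)]

theorem Phi_nonneg (z : ℝ) : 0 ≤ Phi z :=
  mul_nonneg (inv_nonneg.2 (sqrt_nonneg _))
    (setIntegral_nonneg measurableSet_Iic fun _ _ => (exp_pos _).le)

noncomputable def gaussianTail (u : ℝ) : ℝ := ∫ y in Ioi u, exp (-y ^ 2 / 2)

theorem Phi_neg (z : ℝ) : Phi (-z) = (√(2 * π))⁻¹ * gaussianTail z := by
  have h := integral_comp_neg_Iic (-z) fun y : ℝ => exp (-y ^ 2 / 2)
  simp only [neg_neg, neg_sq] at h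
  rw [Phi, h, gaussianTail]

theorem gaussianTail_nonneg (u : ℝ) : 0 ≤ gaussianTail u :=
  setIntegral_nonneg measurableSet_Ioi fun _ _ => (exp_pos _).le

theorem gaussianTail_le (u : ℝ) : gaussianTail u ≤ exp (1 / 2) * exp (-u) :=
  calc gaussianTail u ≤ ∫ y in Ioi u, exp (1 / 2) * exp (-y) :=
        setIntegral_mono_on integrable_exp_neg_sq_div_two.integrableOn
          (integrableOn_const_mul_exp_neg_Ioi _ u) measurableSet_Ioi
          fun y _ => exp_neg_sq_div_two_le y
    _ = exp (1 / 2) * exp (-u) := by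
        rw [integral_const_mul, integral_exp_neg_Ioi]

theorem hasDerivAt_gaussianTail (u : ℝ) :
    HasDerivAt gaussianTail (-exp (-u ^ 2 / 2)) u :=
  hasDerivAt_integral_Ioi integrable_exp_neg_sq_div_two (by fun_prop) u

theorem integrableOn_gaussianTail_Ioi (a : ℝ) : IntegrableOn gaussianTail (Ioi a) := by
  have hcont : Continuous gaussianTail :=
    continuous_iff_continuousAt.2 fun u => (hasDerivAt_gaussianTail u).continuousAt
  refine (integrableOn_const_mul_exp_neg_Ioi (exp (1 / 2)) a).mono' hcont.aestronglyMeasurable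
    (Eventually.of_forall fun u => ?_)
  rw [norm_of_nonneg (gaussianTail_nonneg u)]
  exact gaussianTail_le u

theorem tendsto_mul_gaussianTail_atTop :
    Tendsto (fun u => u * gaussianTail u) atTop (𝓝 0) := by
  have hbound : Tendsto (fun u : ℝ => exp (1 / 2) * (u ^ 1 * exp (-u))) atTop (𝓝 0) := by
    simpa using (tendsto_pow_mul_exp_neg_atTop_nhds_zero 1).const_mul (exp (1 / 2))
  refine squeeze_zero' ?_ ?_ hbound <;> filter_upwards [eventually_ge_atTop 0] with u hu
  · exact mul_nonneg hu (gaussianTail_nonneg u)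
  · calc u * gaussianTail u ≤ u * (exp (1 / 2) * exp (-u)) := by gcongr; exact gaussianTail_le u
      _ = exp (1 / 2) * (u ^ 1 * exp (-u)) := by ring

theorem tendsto_exp_neg_sq_div_two_atTop :
    Tendsto (fun u : ℝ => exp (-u ^ 2 / 2)) atTop (𝓝 0) := by
  have hbound : Tendsto (fun u : ℝ => exp (1 / 2) * exp (-u)) atTop (𝓝 0) := by
    simpa using tendsto_exp_neg_atTop_nhds_zero.const_mul (exp (1 / 2))
  exact squeeze_zero (fun _ => (exp_pos _).le) exp_neg_sq_div_two_le hbound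

theorem integral_gaussianTail_Ioi_zero : ∫ u in Ioi 0, gaussianTail u = 1 := by
  have hderiv : ∀ u ∈ Ici (0 : ℝ),
      HasDerivAt (fun v => v * gaussianTail v - exp (-v ^ 2 / 2)) (gaussianTail u) u := by
    intro u _
    have hsq : HasDerivAt (fun v : ℝ => -v ^ 2 / 2) (-u) u :=
      ((hasDerivAt_pow 2 u).neg.div_const 2).congr_deriv (by push_cast; ring)
    exact (((hasDerivAt_id u).mul (hasDerivAt_gaussianTail u)).sub hsq.exp).congr_deriv
      (by simp only [id_eq, one_mul]; ring)
  rw [integral_Ioi_of_hasDerivAt_of_tendsto' hderiv (integrableOn_gaussianTail_Ioi 0)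
    (by simpa using tendsto_mul_gaussianTail_atTop.sub tendsto_exp_neg_sq_div_two_atTop)]
  simp

theorem integral_Phi_neg_Ioi_zero : ∫ u in Ioi 0, Phi (-u) = (√(2 * π))⁻¹ := by
  simp only [Phi_neg]
  rw [integral_const_mul, integral_gaussianTail_Ioi_zero, mul_one]

/-- g(t) = α√π Φ(-√(2αt))/√(αt) is a probability density on (0,∞). -/
theorem modified_exponential_is_density (α : ℝ) (hα : 0 < α) :
    (∀ t ∈ Set.Ioi (0:ℝ),
        0 ≤ α * Real.sqrt Real.pi * Phi (-Real.sqrt (2 * α * t)) / Real.sqrt (α * t)) ∧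
    ∫ t in Set.Ioi (0:ℝ),
        α * Real.sqrt Real.pi * Phi (-Real.sqrt (2 * α * t)) / Real.sqrt (α * t) = 1 := by
  refine ⟨fun t _ => by have := Phi_nonneg (-√(2 * α * t)); positivity, ?_⟩
  have hs2α : 0 < √(2 * α) := sqrt_pos.2 (by positivity)
  have hintegrand : ∀ t, α * √π * Phi (-√(2 * α * t)) / √(α * t)
      = √α * √π * Phi (-(√(2 * α) * √t)) / √t := by
    intro t
    rw [sqrt_mul (by positivity), sqrt_mul hα.le]
    nth_rewrite 1 [← mul_self_sqrt hα.le]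
    rcases eq_or_ne (√t) 0 with ht | ht
    · simp [ht]
    · field_simp
  simp_rw [hintegrand]
  rw [integral_comp_sqrt_div_sqrt_Ioi (fun x => √α * √π * Phi (-(√(2 * α) * x))),
    integral_const_mul, integral_comp_mul_left_Ioi (fun u => Phi (-u)) 0 hs2α, mul_zero,
    integral_Phi_neg_Ioi_zero, smul_eq_mul, sqrt_mul two_pos.le, sqrt_mul two_pos.le]
  have hs2 : √2 * √2 = 2 := mul_self_sqrt two_pos.le
  field_simp
  linear_combination (-1) * hs2
end

section
/- In the SBP construction with u_{-1}=0, the distribution functions satisfy G_k = F_k + u_k v_{k+1} for all 0 ≤ k ≤ n; in particular G_k ≥ F_k, so the parent distribution stochastically dominates the descendant. -/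
/-! Abel summation: `v i (u i - u (i-1)) + u i (v (i+1) - v i) = u i v (i+1) - u (i-1) v i`
telescopes, so `G_k - F_k = u k v (k+1) - u (-1) v 0 = u k v (k+1) ≥ 0`. -/

open Finset

theorem Finset.sum_Icc_int_sub_pred {G : Type*} [AddCommGroup G] (f : ℤ → G) {a b : ℤ}
    (hab : a - 1 ≤ b) : ∑ i ∈ Icc a b, (f i - f (i - 1)) = f b - f (a - 1) := by
  induction b, hab using Int.leInduction with
  | base => simp
  | succ b hab ih =>
    rw [← insert_Icc_right_eq_Icc_add_one (by omega), sum_insert (by simp), ih, add_sub_cancel_right]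
    abel

theorem sum_mul_sub_pred_eq_sum_neg_mul_sub_add {R : Type*} [CommRing R] (u v : ℤ → R)
    (hu : u (-1) = 0) {k : ℤ} (hk : -1 ≤ k) :
    ∑ i ∈ Icc 0 k, v i * (u i - u (i - 1))
      = ∑ i ∈ Icc 0 k, -(u i * (v (i + 1) - v i)) + u k * v (k + 1) := by
  have telescope := sum_Icc_int_sub_pred (fun i ↦ u i * v (i + 1)) (a := 0) (b := k) (by omega)
  simp only [sub_add_cancel, zero_sub, hu, zero_mul, sub_zero] at telescope
  rw [← telescope, ← sum_add_distrib]
  exact sum_congr rfl fun i _ ↦ by ring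

theorem sbp_distribution_functions_general (u v : ℤ → ℝ) (n : ℤ)
    (hum1 : u (-1) = 0)
    (hu_nonneg : ∀ i, -1 ≤ i → i ≤ n → 0 ≤ u i)
    (hv_nonneg : ∀ i, 0 ≤ i → i ≤ n + 1 → 0 ≤ v i) :
    ∀ k, 0 ≤ k → k ≤ n →
      (∑ i ∈ Finset.Icc (0:ℤ) k, v i * (u i - u (i - 1)))
        = (∑ i ∈ Finset.Icc (0:ℤ) k, -(u i * (v (i + 1) - v i))) + u k * v (k + 1) ∧
      (∑ i ∈ Finset.Icc (0:ℤ) k, -(u i * (v (i + 1) - v i)))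
        ≤ ∑ i ∈ Finset.Icc (0:ℤ) k, v i * (u i - u (i - 1)) := by
  intro k hk hkn
  have by_parts := sum_mul_sub_pred_eq_sum_neg_mul_sub_add u v hum1 (by omega : -1 ≤ k)
  refine ⟨by_parts, by_parts ▸ le_add_of_nonneg_right (mul_nonneg ?_ ?_)⟩
  · exact hu_nonneg k (by omega) hkn
  · exact hv_nonneg (k + 1) (by omega) (by omega)

/-- in the SBP construction with u_{-1}=0, the distribution
functions satisfy G_k = F_k + u_k v_{k+1}, and so F_k ≤ G_k: the parent
stochastically dominates the descendant. -/
theorem sbp_distribution_functions (u v : ℤ → ℝ) (n : ℤ) (hn : 0 ≤ n)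
    (hum1 : u (-1) = 0)
    (hu_mono : ∀ i, -1 ≤ i → i ≤ n → u i ≤ u (i + 1))
    (hu_nonneg : ∀ i, -1 ≤ i → i ≤ n → 0 ≤ u i)
    (hv_anti : ∀ i, 0 ≤ i → i ≤ n → v (i + 1) ≤ v i)
    (hv_nonneg : ∀ i, 0 ≤ i → i ≤ n + 1 → 0 ≤ v i)
    (hvn1 : v (n + 1) = 0)
    (hp_nonneg : ∀ i ∈ Finset.Icc (0:ℤ) n, 0 ≤ -(u i * (v (i + 1) - v i)))
    (hp_sum : ∑ i ∈ Finset.Icc (0:ℤ) n, -(u i * (v (i + 1) - v i)) = 1) :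
    ∀ k, 0 ≤ k → k ≤ n →
      (∑ i ∈ Finset.Icc (0:ℤ) k, v i * (u i - u (i - 1)))
        = (∑ i ∈ Finset.Icc (0:ℤ) k, -(u i * (v (i + 1) - v i))) + u k * v (k + 1) ∧
      (∑ i ∈ Finset.Icc (0:ℤ) k, -(u i * (v (i + 1) - v i)))
        ≤ ∑ i ∈ Finset.Icc (0:ℤ) k, v i * (u i - u (i - 1)) :=
  sbp_distribution_functions_general u v n hum1 hu_nonneg hv_nonneg
end

section
/- In the SBP construction with u_{-1}=0, the mean of the descendant distribution satisfies μ_g = μ - ∑_{i=1}^n (∑_{j=0}^{i-1} u_j) p_i / u_i, where μ = ∑ i p_i is the parent mean (sum over i with u_i > 0; p_i/u_i interpreted via v). -/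
/-! Writing `v i = ∑_{j ≥ i} p j / u j` and exchanging the order of summation turns `μ_g` into
`∑_j (p j / u j) ∑_{i ≤ j} i (u i - u (i - 1))`, and summation by parts evaluates the inner sum
as `j u j - ∑_{i < j} u i`. -/

open Finset

theorem Finset.sum_Icc_sum_Icc_comm {α M : Type*} [LinearOrder α] [LocallyFiniteOrder α]
    [AddCommMonoid M] (a b : α) (f : α → α → M) :
    ∑ i ∈ Icc a b, ∑ j ∈ Icc i b, f i j = ∑ j ∈ Icc a b, ∑ i ∈ Icc a j, f i j :=
  sum_comm' fun i j => by grind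

theorem Int.sum_Icc_zero_mul_sub_pred {R : Type*} [CommRing R] (u : ℤ → R) {j : ℤ} (hj : 0 ≤ j) :
    ∑ i ∈ Icc 0 j, (i : R) * (u i - u (i - 1)) = j * u j - ∑ i ∈ Icc 0 (j - 1), u i := by
  induction j, hj using Int.leInduction with
  | base => simp
  | succ j hj ih =>
    rw [← insert_Icc_sub_one_right_eq_Icc (by omega : (0:ℤ) ≤ j + 1), sum_insert (by simp),
      add_sub_cancel_right, ih, ← insert_Icc_sub_one_right_eq_Icc hj, sum_insert (by simp)]
    push_cast
    ring

theorem sbp_mean_general (u p : ℤ → ℝ) (n : ℤ)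
    (hu_pos : ∀ i, 0 ≤ i → i ≤ n → 0 < u i) :
    ∑ i ∈ Finset.Icc (0:ℤ) n,
        (i : ℝ) * ((∑ j ∈ Finset.Icc i n, p j / u j) * (u i - u (i - 1)))
      = (∑ i ∈ Finset.Icc (0:ℤ) n, (i : ℝ) * p i)
        - ∑ i ∈ Finset.Icc (1:ℤ) n, (∑ j ∈ Finset.Icc (0:ℤ) (i - 1), u j) * p i / u i := by
  calc _ = ∑ j ∈ Icc 0 n, p j / u j * ∑ i ∈ Icc 0 j, (i : ℝ) * (u i - u (i - 1)) := by
        simp_rw [sum_mul, mul_sum, sum_Icc_sum_Icc_comm]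
        exact sum_congr rfl fun j _ => sum_congr rfl fun i _ => by ring
    _ = ∑ j ∈ Icc 0 n, ((j : ℝ) * p j - (∑ i ∈ Icc 0 (j - 1), u i) * p j / u j) := by
        refine sum_congr rfl fun j hj => ?_
        obtain ⟨hj0, hjn⟩ := mem_Icc.mp hj
        rw [Int.sum_Icc_zero_mul_sub_pred u hj0]
        field_simp [(hu_pos j hj0 hjn).ne']
    _ = _ := by
        rw [sum_sub_distrib, sum_subset (Icc_subset_Icc_left zero_le_one)]
        intro j hj hj1
        obtain rfl : j = 0 := by grind
        simp

/-- in the SBP construction with u_{-1}=0, u_i > 0 for i ≥ 0,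
v_i = ∑_{j=i}^n p_j/u_j, q_i = v_i(u_i - u_{i-1}), the descendant mean is
μ_g = μ - ∑_{i=1}^n (∑_{j=0}^{i-1} u_j) p_i / u_i. -/
theorem sbp_mean (u p : ℤ → ℝ) (n : ℤ) (hn : 0 ≤ n)
    (hum1 : u (-1) = 0)
    (hu_pos : ∀ i, 0 ≤ i → i ≤ n → 0 < u i)
    (hu_mono : ∀ i, -1 ≤ i → i ≤ n → u i ≤ u (i + 1))
    (hp_nonneg : ∀ i ∈ Finset.Icc (0:ℤ) n, 0 ≤ p i)
    (hp_sum : ∑ i ∈ Finset.Icc (0:ℤ) n, p i = 1) :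
    ∑ i ∈ Finset.Icc (0:ℤ) n,
        (i : ℝ) * ((∑ j ∈ Finset.Icc i n, p j / u j) * (u i - u (i - 1)))
      = (∑ i ∈ Finset.Icc (0:ℤ) n, (i : ℝ) * p i)
        - ∑ i ∈ Finset.Icc (1:ℤ) n, (∑ j ∈ Finset.Icc (0:ℤ) (i - 1), u j) * p i / u i :=
  sbp_mean_general u p n hu_pos
end

section
/- Let (p_i) be a pmf on {0,…,n} with pgf H_0(x) = ∑_{j=0}^n p_j x^j, and for r > 1 define q_i = H_i(1/r) r^i (1 - 1/r) / (1 - H_0(1/r)/r) where H_i(x) = ∑_{j=i}^n p_j x^j. Then (q_i) is a pmf on {0,…,n}, and its mean equals (μ+1)/(1 - H_0(1/r)/r) - r/(r-1), where μ is the mean of (p_i). -/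
/-!
Put `a i = H_i(1/r) r^i`. Since `H_i(x) - H_{i+1}(x) = p_i x^i`, these weights satisfy the first-order
recursion `a i = p i + a (i + 1) / r` with `a (n + 1) = 0` and `a 0 = H_0(1/r)`. Summing the
recursion, and summing it against `i`, gives two linear equations for `S = ∑ a i` and
`M = ∑ i a i`, namely `S = 1 + (S - H_0)/r` and `M = μ + (M - S + H_0)/r`; solving them yields
both the normalisation and the mean of `q_i = a i (1 - 1/r) / (1 - H_0/r)`.
-/

/-- Partial generating function H_i(x) = ∑_{j=i}^n p_j x^j. -/
noncomputable def H (p : ℕ → ℝ) (n i : ℕ) (x : ℝ) : ℝ :=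
  ∑ j ∈ Finset.Icc i n, p j * x ^ j

open Finset

section Recursion

variable {R : Type*} [CommRing R] (a b : ℕ → R) (c : R) (m : ℕ)

lemma sum_range_shift_of_eq_zero (hlast : a (m + 1) = 0) :
    ∑ i ∈ range (m + 1), a (i + 1) = ∑ i ∈ range (m + 1), a i - a 0 := by
  rw [eq_sub_iff_add_eq, ← sum_range_succ', sum_range_succ, hlast, add_zero]

lemma sum_range_mul_shift_of_eq_zero (hlast : a (m + 1) = 0) :
    ∑ i ∈ range (m + 1), (i : R) * a (i + 1)
      = ∑ i ∈ range (m + 1), (i : R) * a i - (∑ i ∈ range (m + 1), a i - a 0) := by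
  have hshift : ∑ i ∈ range (m + 1), ((i : R) + 1) * a (i + 1)
      = ∑ i ∈ range (m + 1), (i : R) * a i := by
    simpa [sum_range_succ, hlast] using (sum_range_succ' (fun i => (i : R) * a i) (m + 1)).symm
  rw [← hshift, ← sum_range_shift_of_eq_zero a m hlast, ← sum_sub_distrib]
  exact sum_congr rfl fun i _ => by ring

lemma sum_range_eq_of_recursion (hrec : ∀ i ∈ range (m + 1), a i = b i + c * a (i + 1))
    (hlast : a (m + 1) = 0) :
    ∑ i ∈ range (m + 1), a i
      = ∑ i ∈ range (m + 1), b i + c * (∑ i ∈ range (m + 1), a i - a 0) := calc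
  _ = ∑ i ∈ range (m + 1), (b i + c * a (i + 1)) := sum_congr rfl hrec
  _ = _ := by rw [sum_add_distrib, ← mul_sum, sum_range_shift_of_eq_zero a m hlast]

lemma sum_range_mul_eq_of_recursion
    (hrec : ∀ i ∈ range (m + 1), a i = b i + c * a (i + 1)) (hlast : a (m + 1) = 0) :
    ∑ i ∈ range (m + 1), (i : R) * a i
      = ∑ i ∈ range (m + 1), (i : R) * b i
        + c * (∑ i ∈ range (m + 1), (i : R) * a i - (∑ i ∈ range (m + 1), a i - a 0)) := calc
  _ = ∑ i ∈ range (m + 1), ((i : R) * b i + c * ((i : R) * a (i + 1))) :=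
    sum_congr rfl fun i hi => by rw [hrec i hi]; ring
  _ = _ := by rw [sum_add_distrib, ← mul_sum, sum_range_mul_shift_of_eq_zero a m hlast]

end Recursion

section PartialGeneratingFunction

variable (p : ℕ → ℝ) (n : ℕ) (x : ℝ)

lemma H_eq_add_H_succ {i : ℕ} (hi : i ≤ n) : H p n i x = p i * x ^ i + H p n (i + 1) x := by
  rw [H, H, Icc_eq_cons_Ioc hi, sum_cons, Icc_add_one_left_eq_Ioc]

lemma H_succ_self : H p n (n + 1) x = 0 := by
  simp [H]

lemma H_zero_eq_sum_range : H p n 0 x = ∑ j ∈ range (n + 1), p j * x ^ j := by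
  rw [H, range_eq_Ico, Ico_add_one_right_eq_Icc]

variable {p n x}

lemma H_nonneg (hp : ∀ i ∈ range (n + 1), 0 ≤ p i) (hx : 0 ≤ x) (i : ℕ) : 0 ≤ H p n i x :=
  sum_nonneg fun j hj =>
    mul_nonneg (hp j (mem_range_succ_iff.mpr (mem_Icc.mp hj).2)) (pow_nonneg hx j)

lemma H_zero_le_one (hp : ∀ i ∈ range (n + 1), 0 ≤ p i) (hp_sum : ∑ i ∈ range (n + 1), p i = 1)
    (hx₀ : 0 ≤ x) (hx₁ : x ≤ 1) : H p n 0 x ≤ 1 := by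
  rw [H_zero_eq_sum_range, ← hp_sum]
  exact sum_le_sum fun j hj => mul_le_of_le_one_right (hp j hj) (pow_le_one₀ hx₀ hx₁)

lemma H_mul_pow_eq_add {r : ℝ} (hxr : x * r = 1) {i : ℕ} (hi : i ≤ n) :
    H p n i x * r ^ i = p i + x * (H p n (i + 1) x * r ^ (i + 1)) := by
  have hpow : (x * r) ^ i = 1 := by rw [hxr, one_pow]
  rw [H_eq_add_H_succ p n x hi]
  linear_combination p i * hpow - H p n (i + 1) x * r ^ i * hxr

end PartialGeneratingFunction

/-- for a pmf (p_i) on {0,…,n} and r > 1, the sequence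
q_i = H_i(1/r) r^i (1 - 1/r)/(1 - H_0(1/r)/r) is a pmf with mean
(μ+1)/(1 - H_0(1/r)/r) - r/(r-1). -/
theorem r_distribution (p : ℕ → ℝ) (n : ℕ) (r : ℝ) (hr : 1 < r)
    (hp_nonneg : ∀ i ∈ Finset.range (n + 1), 0 ≤ p i)
    (hp_sum : ∑ i ∈ Finset.range (n + 1), p i = 1) :
    (∀ i ∈ Finset.range (n + 1),
      0 ≤ H p n i (1 / r) * r ^ i * (1 - 1 / r) / (1 - H p n 0 (1 / r) / r)) ∧
    (∑ i ∈ Finset.range (n + 1),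
      H p n i (1 / r) * r ^ i * (1 - 1 / r) / (1 - H p n 0 (1 / r) / r)) = 1 ∧
    (∑ i ∈ Finset.range (n + 1),
      (i : ℝ) * (H p n i (1 / r) * r ^ i * (1 - 1 / r) / (1 - H p n 0 (1 / r) / r)))
      = ((∑ i ∈ Finset.range (n + 1), (i : ℝ) * p i) + 1) / (1 - H p n 0 (1 / r) / r)
        - r / (r - 1) := by
  have hr₀ : 0 < r := one_pos.trans hr
  have hx₀ : 0 ≤ 1 / r := by positivity
  have hxr : 1 / r * r = 1 := one_div_mul_cancel hr₀.ne'
  set a : ℕ → ℝ := fun i => H p n i (1 / r) * r ^ i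
  have hrec : ∀ i ∈ range (n + 1), a i = p i + 1 / r * a (i + 1) :=
    fun i hi => H_mul_pow_eq_add hxr (mem_range_succ_iff.mp hi)
  have hlast : a (n + 1) = 0 := by simp [a, H_succ_self]
  have ha₀ : a 0 = H p n 0 (1 / r) := by simp [a]
  have hS := sum_range_eq_of_recursion a p (1 / r) n hrec hlast
  have hM := sum_range_mul_eq_of_recursion a p (1 / r) n hrec hlast
  rw [ha₀, hp_sum] at hS
  rw [ha₀] at hM
  have hH₀ : H p n 0 (1 / r) < r :=
    (H_zero_le_one hp_nonneg hp_sum hx₀ ((div_le_one hr₀).mpr hr.le)).trans_lt hr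
  have hD : 0 < 1 - H p n 0 (1 / r) / r := by rwa [sub_pos, div_lt_one hr₀]
  have hrH : r - H p n 0 (1 / r) ≠ 0 := (sub_pos.mpr hH₀).ne'
  have hr₁ : r - 1 ≠ 0 := sub_ne_zero.mpr hr.ne'
  have hq : ∀ i, H p n i (1 / r) * r ^ i * (1 - 1 / r) / (1 - H p n 0 (1 / r) / r)
      = a i * ((1 - 1 / r) / (1 - H p n 0 (1 / r) / r)) := fun i => mul_div_assoc _ _ _
  simp only [hq, ← mul_assoc, ← sum_mul]
  refine ⟨fun i _ => ?_, ?_, ?_⟩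
  · have : 0 ≤ 1 - 1 / r := by rw [sub_nonneg, div_le_one hr₀]; exact hr.le
    have := H_nonneg hp_nonneg hx₀ i
    positivity
  · field_simp at hS ⊢
    linear_combination hS
  · field_simp at hS hM ⊢
    linear_combination (r - 1) * hM - hS
end

section
/- For the r-distribution with r > 1, as r → ∞, q_i → p_i for each i; and as r → 1⁺, q_i → (p_i + ∑_{j=i+1}^n p_j)/(1+μ), a partial-sum distribution. -/
/-!
Substitute `x = 1 / r`. Since `H_i(x) = x^i T_i(x)` with `T_i(x) = ∑_{j ≥ i} p_j x^(j-i)`,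
the r-distribution is `q_i = T_i(x) (1 - x) / (1 - x T_0(x))`, a rational function of `x`
continuous at `x = 0` (where it equals `T_i(0) = p_i`), which gives the limit `r → ∞`.
For `r → 1⁺`, i.e. `x → 1⁻`, both numerator and denominator vanish; but `∑ p_j = 1` gives
`1 - x T_0(x) = (1 - x) ∑_j p_j (1 + x + ⋯ + x^j)`, so after cancelling `1 - x` the quotient
is continuous at `x = 1`, with value `T_i(1) / (1 + μ)`.
-/

open Filter

open Topology Finset

noncomputable def rDist (p : ℕ → ℝ) (n i : ℕ) (r : ℝ) : ℝ :=
  H p n i (1 / r) * r ^ i * (1 - 1 / r) / (1 - H p n 0 (1 / r) / r)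

noncomputable def tailPoly (p : ℕ → ℝ) (n i : ℕ) (x : ℝ) : ℝ :=
  ∑ j ∈ Icc i n, p j * x ^ (j - i)

section

variable {p : ℕ → ℝ} {n i : ℕ}

@[fun_prop]
theorem continuous_tailPoly : Continuous (tailPoly p n i) := by
  unfold tailPoly
  fun_prop

theorem H_eq_pow_mul_tailPoly (x : ℝ) : H p n i x = x ^ i * tailPoly p n i x := by
  rw [H, tailPoly, mul_sum]
  refine sum_congr rfl fun j hj => ?_
  rw [mul_left_comm, ← pow_add, Nat.add_sub_cancel' (mem_Icc.mp hj).1]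

theorem tailPoly_zero (hi : i ≤ n) : tailPoly p n i 0 = p i := by
  rw [tailPoly, ← insert_Icc_add_one_left_eq_Icc hi, sum_insert (by simp), Nat.sub_self,
    pow_zero, mul_one, add_eq_left]
  exact sum_eq_zero fun j hj => by
    rw [zero_pow (by have := (mem_Icc.mp hj).1; omega), mul_zero]

theorem tailPoly_one (hi : i ≤ n) :
    tailPoly p n i 1 = p i + ∑ j ∈ Icc (i + 1) n, p j := by
  simp only [tailPoly, one_pow, mul_one]
  rw [← insert_Icc_add_one_left_eq_Icc hi, sum_insert (by simp)]

theorem rDist_eq {r : ℝ} (hr : r ≠ 0) :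
    rDist p n i r = tailPoly p n i r⁻¹ * (1 - r⁻¹) / (1 - r⁻¹ * tailPoly p n 0 r⁻¹) := by
  rw [rDist, H_eq_pow_mul_tailPoly, H_eq_pow_mul_tailPoly, one_div, inv_pow, pow_zero, one_mul,
    mul_right_comm _ _ (r ^ i), inv_mul_cancel₀ (pow_ne_zero i hr), one_mul,
    div_eq_inv_mul (tailPoly p n 0 r⁻¹)]

theorem one_sub_mul_tailPoly_zero (hp : ∑ j ∈ range (n + 1), p j = 1) (x : ℝ) :
    1 - x * tailPoly p n 0 x =
      (1 - x) * ∑ j ∈ range (n + 1), p j * ∑ k ∈ range (j + 1), x ^ k := by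
  rw [tailPoly, ← Nat.range_succ_eq_Icc_zero]
  nth_rewrite 1 [← hp]
  rw [mul_sum, mul_sum, ← sum_sub_distrib]
  refine sum_congr rfl fun j _ => ?_
  linear_combination p j * geom_sum_mul x (j + 1)

theorem sum_mul_geom_sum_one :
    ∑ j ∈ range (n + 1), p j * ∑ k ∈ range (j + 1), (1 : ℝ) ^ k =
      ∑ j ∈ range (n + 1), p j + ∑ j ∈ range (n + 1), (j : ℝ) * p j := by
  rw [← sum_add_distrib]
  refine sum_congr rfl fun j _ => ?_
  simp only [one_pow, sum_const, card_range, nsmul_eq_mul, Nat.cast_succ]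
  ring

theorem tendsto_rDist_atTop (hi : i ≤ n) : Tendsto (rDist p n i) atTop (𝓝 (p i)) := by
  have hF : ContinuousAt
      (fun x => tailPoly p n i x * (1 - x) / (1 - x * tailPoly p n 0 x)) 0 := by
    fun_prop (disch := simp)
  have hlim := hF.tendsto.comp tendsto_inv_atTop_zero
  simp only [sub_zero, mul_one, zero_mul, div_one, tailPoly_zero hi] at hlim
  refine hlim.congr' ?_
  filter_upwards [eventually_ne_atTop 0] with r hr using (rDist_eq hr).symm

theorem tendsto_rDist_nhdsGT_one (hp : ∑ j ∈ range (n + 1), p j = 1) (hi : i ≤ n)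
    (hμ : 1 + ∑ j ∈ range (n + 1), (j : ℝ) * p j ≠ 0) :
    Tendsto (rDist p n i) (𝓝[>] 1)
      (𝓝 ((p i + ∑ j ∈ Icc (i + 1) n, p j) / (1 + ∑ j ∈ range (n + 1), (j : ℝ) * p j))) := by
  set D : ℝ → ℝ := fun x => ∑ j ∈ range (n + 1), p j * ∑ k ∈ range (j + 1), x ^ k
  have hD1 : D 1 = 1 + ∑ j ∈ range (n + 1), (j : ℝ) * p j := by
    rw [show D 1 = _ from sum_mul_geom_sum_one, hp]
  have hG : ContinuousAt (fun x => tailPoly p n i x / D x) 1 :=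
    continuous_tailPoly.continuousAt.div (by fun_prop) (hD1 ▸ hμ)
  have hinv : Tendsto (fun r : ℝ => r⁻¹) (𝓝[>] 1) (𝓝 1) := by
    have := (continuousAt_inv₀ (one_ne_zero (α := ℝ))).tendsto.mono_left
      (nhdsWithin_le_nhds (s := Set.Ioi 1))
    rwa [inv_one] at this
  have hlim := hG.tendsto.comp hinv
  simp only [hD1, tailPoly_one hi] at hlim
  refine hlim.congr' ?_
  filter_upwards [self_mem_nhdsWithin] with r (hr : 1 < r)
  have hx : 1 - r⁻¹ ≠ 0 := sub_ne_zero.mpr (inv_lt_one_of_one_lt₀ hr).ne'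
  rw [Function.comp_apply, rDist_eq (by positivity), one_sub_mul_tailPoly_zero hp,
    mul_comm (1 - r⁻¹), mul_div_mul_right _ _ hx]

end

/-- for the r-distribution
q_i(r) = H_i(1/r) r^i (1-1/r)/(1 - H_0(1/r)/r), as r → ∞, q_i(r) → p_i, and
as r → 1⁺, q_i(r) → (p_i + ∑_{j=i+1}^n p_j)/(1+μ). -/
theorem r_distribution_limits (p : ℕ → ℝ) (n : ℕ)
    (hp_nonneg : ∀ i ∈ Finset.range (n + 1), 0 ≤ p i)
    (hp_sum : ∑ i ∈ Finset.range (n + 1), p i = 1) :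
    ∀ i ∈ Finset.range (n + 1),
      Tendsto (fun r : ℝ => H p n i (1 / r) * r ^ i * (1 - 1 / r) / (1 - H p n 0 (1 / r) / r))
        atTop (nhds (p i)) ∧
      Tendsto (fun r : ℝ => H p n i (1 / r) * r ^ i * (1 - 1 / r) / (1 - H p n 0 (1 / r) / r))
        (nhdsWithin 1 (Set.Ioi 1))
        (nhds ((p i + ∑ j ∈ Finset.Icc (i + 1) n, p j)
          / (1 + ∑ j ∈ Finset.range (n + 1), (j : ℝ) * p j))) := by
  intro i hi
  have hin : i ≤ n := Nat.lt_succ_iff.mp (mem_range.mp hi)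
  have hμ : 0 ≤ ∑ j ∈ range (n + 1), (j : ℝ) * p j :=
    sum_nonneg fun j hj => mul_nonneg j.cast_nonneg (hp_nonneg j hj)
  exact ⟨tendsto_rDist_atTop hin, tendsto_rDist_nhdsGT_one hp_sum hin (by positivity)⟩
end

section
/- If (q_i)_{i≥0} is a pmf on the nonnegative integers with ∑_j q_j (j+1)^λ < ∞ for λ > 0, then p_i = ((i+1)^{-λ} - (i+2)^{-λ}) ∑_{j=0}^i q_j (j+1)^λ defines a pmf, and p_0 = (1 - 2^{-λ}) q_0 < q_0 when q_0 > 0. -/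
/-!
Exchanging the order of summation, the weight `q j * (j + 1) ^ λ` is multiplied by the
telescoping sum `∑_{i ≥ j} ((i + 1) ^ (-λ) - (i + 2) ^ (-λ)) = (j + 1) ^ (-λ)`, so
`∑ p_i = ∑ q_j = 1`. The exchange is done in `ℝ≥0∞`, where Tonelli needs no summability.
-/

open Real Filter Topology Finset

theorem ENNReal.tsum_mul_sum_range_succ (d b : ℕ → ENNReal) :
    ∑' i, d i * ∑ j ∈ range (i + 1), b j = ∑' j, b j * ∑' i, d (i + j) := by
  have h_inner : ∀ i,
      d i * ∑ j ∈ range (i + 1), b j = ∑' j, b j * if j ≤ i then d i else 0 := by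
    intro i
    rw [tsum_eq_sum (s := range (i + 1)) fun j hj => by
      rw [if_neg (by simpa [Nat.lt_succ_iff] using hj), mul_zero], mul_sum]
    refine sum_congr rfl fun j hj => ?_
    rw [if_pos (Nat.lt_succ_iff.1 (mem_range.1 hj)), mul_comm]
  have h_tail : ∀ j, ∑' i, (if j ≤ i then d i else 0) = ∑' i, d (i + j) := by
    intro j
    rw [← ENNReal.summable.sum_add_tsum_nat_add' (k := j),
      sum_eq_zero fun i hi => if_neg (not_le.2 (mem_range.1 hi)), zero_add]
    simp
  simp_rw [h_inner]
  rw [ENNReal.tsum_comm]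
  simp_rw [ENNReal.tsum_mul_left, h_tail]

theorem Antitone.hasSum_sub_succ {a : ℕ → ℝ} {l : ℝ} (ha : Antitone a)
    (hl : Tendsto a atTop (𝓝 l)) : HasSum (fun i => a i - a (i + 1)) (a 0 - l) := by
  refine (hasSum_iff_tendsto_nat_of_nonneg (fun i => sub_nonneg.2 (ha i.le_succ)) _).2 ?_
  simp_rw [sum_range_sub']
  exact tendsto_const_nhds.sub hl

theorem tsum_eq_toReal_tsum_ofReal {α : Type*} {f : α → ℝ} (hf : ∀ i, 0 ≤ f i) :
    ∑' i, f i = (∑' i, ENNReal.ofReal (f i)).toReal := by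
  rw [ENNReal.tsum_toReal_eq fun _ => ENNReal.ofReal_ne_top]
  exact tsum_congr fun i => (ENNReal.toReal_ofReal (hf i)).symm

theorem Antitone.tsum_sub_succ_mul_sum_range_succ {a b : ℕ → ℝ} (ha : Antitone a)
    (ha0 : Tendsto a atTop (𝓝 0)) (hb : ∀ j, 0 ≤ b j) :
    ∑' i, (a i - a (i + 1)) * ∑ j ∈ range (i + 1), b j = ∑' j, b j * a j := by
  have hd : ∀ i, 0 ≤ a i - a (i + 1) := fun i => sub_nonneg.2 (ha i.le_succ)
  have h_tail : ∀ j,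
      ∑' i, ENNReal.ofReal (a (i + j) - a (i + j + 1)) = ENNReal.ofReal (a j) := by
    intro j
    have h := (ha.comp_monotone fun _ _ h => Nat.add_le_add_right h j).hasSum_sub_succ
      (ha0.comp (tendsto_add_atTop_nat j))
    simp only [Function.comp_def, zero_add, sub_zero, Nat.add_right_comm _ 1 j] at h
    rw [← h.tsum_eq, ENNReal.ofReal_tsum_of_nonneg (fun i => hd (i + j)) h.summable]
  rw [tsum_eq_toReal_tsum_ofReal fun i => mul_nonneg (hd i) (sum_nonneg fun j _ => hb j),
    tsum_eq_toReal_tsum_ofReal fun j => mul_nonneg (hb j) (ha.le_of_tendsto ha0 j)]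
  congr 1
  calc ∑' i, ENNReal.ofReal ((a i - a (i + 1)) * ∑ j ∈ range (i + 1), b j)
      = ∑' i, ENNReal.ofReal (a i - a (i + 1)) *
          ∑ j ∈ range (i + 1), ENNReal.ofReal (b j) := by
        simp_rw [ENNReal.ofReal_mul (hd _), ENNReal.ofReal_sum_of_nonneg fun j _ => hb j]
    _ = ∑' j, ENNReal.ofReal (b j) * ∑' i, ENNReal.ofReal (a (i + j) - a (i + j + 1)) :=
        ENNReal.tsum_mul_sum_range_succ _ _
    _ = ∑' j, ENNReal.ofReal (b j * a j) := by
        simp_rw [h_tail, ENNReal.ofReal_mul (hb _)]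

/-- if (q_i) is a pmf on ℕ and λ > 0, then
p_i = ((i+1)^{-λ} - (i+2)^{-λ}) ∑_{j=0}^i q_j (j+1)^λ is a pmf, and
p_0 = (1 - 2^{-λ}) q_0, which is < q_0 when q_0 > 0. -/
theorem long_tailed_lambda_distribution (q : ℕ → ℝ) (lam : ℝ) (hlam : 0 < lam)
    (hq_nonneg : ∀ i, 0 ≤ q i) (hq_sum : ∑' i, q i = 1) :
    (∀ i : ℕ, 0 ≤ (((i:ℝ) + 1) ^ (-lam) - ((i:ℝ) + 2) ^ (-lam))
        * ∑ j ∈ Finset.range (i + 1), q j * ((j:ℝ) + 1) ^ lam) ∧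
    (∑' i : ℕ, (((i:ℝ) + 1) ^ (-lam) - ((i:ℝ) + 2) ^ (-lam))
        * ∑ j ∈ Finset.range (i + 1), q j * ((j:ℝ) + 1) ^ lam) = 1 ∧
    (((0:ℝ) + 1) ^ (-lam) - ((0:ℝ) + 2) ^ (-lam))
        * (∑ j ∈ Finset.range 1, q j * ((j:ℝ) + 1) ^ lam)
      = (1 - (2:ℝ) ^ (-lam)) * q 0 ∧
    (0 < q 0 → (1 - (2:ℝ) ^ (-lam)) * q 0 < q 0) := by
  set a : ℕ → ℝ := fun i => ((i:ℝ) + 1) ^ (-lam)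
  have ha : Antitone a := fun i j hij =>
    rpow_le_rpow_of_nonpos (by positivity) (by gcongr) (by linarith)
  have ha0 : Tendsto a atTop (𝓝 0) :=
    (tendsto_rpow_neg_atTop hlam).comp
      (tendsto_atTop_add_const_right _ 1 tendsto_natCast_atTop_atTop)
  have hb : ∀ j : ℕ, 0 ≤ q j * ((j:ℝ) + 1) ^ lam := fun j => by
    have := hq_nonneg j; positivity
  have ha_succ : ∀ i : ℕ, ((i:ℝ) + 2) ^ (-lam) = a (i + 1) := fun i => by
    simp only [a]; push_cast; ring_nf
  have hba : ∀ j : ℕ, q j * ((j:ℝ) + 1) ^ lam * a j = q j := fun j => by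
    rw [mul_assoc, ← rpow_add (by positivity), add_neg_cancel, rpow_zero, mul_one]
  refine ⟨fun i => ?_, ?_, by simp, fun hq0 => ?_⟩
  · rw [ha_succ]
    exact mul_nonneg (sub_nonneg.2 (ha i.le_succ)) (sum_nonneg fun j _ => hb j)
  · simp_rw [ha_succ]
    rw [ha.tsum_sub_succ_mul_sum_range_succ ha0 hb]
    simpa only [hba] using hq_sum
  · have : 0 < (2:ℝ) ^ (-lam) := rpow_pos_of_pos two_pos _
    nlinarith
end
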